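/- arXiv:2504.12510 — 4 statements merged into one kernel-verified Lean document; each statement's English description precedes it below -/
import Mathlib

section
/- A sequence of real numbers (a_k) converges if and only if for every ε > 0 the jump-counting function N_ε(a_k) is finite. -/
/-- The set of jump counts `M` at altitude `ε`. -/
def jumpSet (ε : ℝ) (a : ℕ → ℝ) : Set ℕ :=
  {M | ∃ k : Fin (M + 1) → ℕ, StrictMono k ∧
    ∀ n : Fin M, ε < |a (k n.succ) - a (k n.castSucc)|}

lemma strictMono_fin_le {M : ℕ} {k : Fin (M + 1) → ℕ} (hk : StrictMono k) :
    ∀ i : Fin (M + 1), (i : ℕ) ≤ k i := by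
  intro i
  induction i using Fin.induction with
  | zero => exact Nat.zero_le _
  | succ i ih =>
    have h := hk (Fin.castSucc_lt_succ : i.castSucc < i.succ)
    simp only [Fin.val_succ]
    simp only [Fin.coe_castSucc] at ih
    omega

lemma strictMono_snoc {M : ℕ} {k : Fin (M + 1) → ℕ} (hk : StrictMono k) {n : ℕ}
    (hn : k (Fin.last M) < n) : StrictMono (Fin.snoc k n : Fin (M + 2) → ℕ) := by
  intro i j hij
  rcases Fin.eq_castSucc_or_eq_last j with ⟨j', rfl⟩ | rfl
  · have hi : i ≠ Fin.last (M + 1) := by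
      intro h; subst h
      exact absurd (lt_of_lt_of_le hij (Fin.le_last _)) (lt_irrefl _)
    obtain ⟨i', rfl⟩ := Fin.exists_castSucc_eq.2 hi
    simp only [Fin.snoc_castSucc]
    exact hk (Fin.castSucc_lt_castSucc_iff.1 hij)
  · have hi : i ≠ Fin.last (M + 1) := ne_of_lt hij
    obtain ⟨i', rfl⟩ := Fin.exists_castSucc_eq.2 hi
    simp only [Fin.snoc_castSucc, Fin.snoc_last]
    exact lt_of_le_of_lt (hk.monotone (Fin.le_last i')) hn

/-- a real sequence converges iff the jump-counting function
`N_ε(a)` is finite for every `ε > 0`. -/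
theorem converges_iff_jumpCount_finite (a : ℕ → ℝ) :
    (∃ L : ℝ, Filter.Tendsto a Filter.atTop (nhds L)) ↔
      ∀ ε : ℝ, 0 < ε → (jumpSet ε a).Finite := by
  constructor
  · rintro ⟨L, hL⟩ ε hε
    have hC : CauchySeq a := hL.cauchySeq
    obtain ⟨N, hN⟩ := Metric.cauchySeq_iff.1 hC ε hε
    apply (Set.finite_Iic N).subset
    rintro M ⟨k, hk, hjump⟩
    simp only [Set.mem_Iic]
    by_contra hMN
    push_neg at hMN
    set n : Fin M := ⟨N, hMN⟩ with hn
    have h1 : N ≤ k n.castSucc := by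
      have := strictMono_fin_le hk n.castSucc
      simpa using this
    have h2 : N ≤ k n.succ := le_trans h1 (le_of_lt (hk (Fin.castSucc_lt_succ : n.castSucc < n.succ)))
    have := hN _ h2 _ h1
    rw [Real.dist_eq] at this
    exact absurd (hjump n) (not_lt.2 (le_of_lt this))
  · intro h
    have hC : CauchySeq a := by
      rw [Metric.cauchySeq_iff']
      intro ε hε
      have hε2 : (0 : ℝ) < ε / 2 := by linarith
      have hfin := h (ε / 2) hε2
      have hne : (jumpSet (ε / 2) a).Nonempty := by
        refine ⟨0, Fin.val, Fin.val_strictMono, fun n => n.elim0⟩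
      set M := sSup (jumpSet (ε / 2) a) with hM
      have hMmem : M ∈ jumpSet (ε / 2) a := Nat.sSup_mem hne hfin.bddAbove
      have hMsucc : M + 1 ∉ jumpSet (ε / 2) a := fun hmem => by
        have := le_csSup hfin.bddAbove hmem
        omega
      obtain ⟨k, hk, hjump⟩ := hMmem
      refine ⟨k (Fin.last M), fun n hn => ?_⟩
      by_contra hd
      push_neg at hd
      rw [Real.dist_eq] at hd
      have hngt : k (Fin.last M) < n := by
        rcases lt_or_eq_of_le hn with h' | h'
        · exact h'
        · exfalso; rw [← h'] at hd; simp at hd; linarith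
      apply hMsucc
      refine ⟨Fin.snoc k n, strictMono_snoc hk hngt, fun m => ?_⟩
      rcases Fin.eq_castSucc_or_eq_last m with ⟨m', rfl⟩ | rfl
      · have e1 : (m'.castSucc).succ = (m'.succ).castSucc := rfl
        simp only [Fin.succ_castSucc, Fin.snoc_castSucc]
        exact hjump m'
      · have e1 : (Fin.last M).succ = Fin.last (M + 1) := rfl
        have e2 : (Fin.last M).castSucc = Fin.castSucc (Fin.last M) := rfl
        rw [e1]
        simp only [Fin.snoc_last, Fin.snoc_castSucc]
        linarith [hd, abs_nonneg (a n - a (k (Fin.last M)))]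
    exact cauchySeq_tendsto_of_complete hC
end

section
/- Let H ≥ 2 and t ∈ ℝ. Then ψ(t) = -(1/(2πi)) Σ_{1 ≤ |h| ≤ H} e(ht)/h + O(min{1, 1/(H‖t‖)}), where ψ(t) = {t} - 1/2, e(t) = e^{2πit}, and ‖t‖ denotes the distance from t to the nearest integer. -/
/-- Distance from `t` to the nearest integer, `‖t‖`. -/
noncomputable def distNearestInt (t : ℝ) : ℝ := |t - round t|

/-- The function `min{1, 1/(H‖t‖)}` (interpreted as `1` when `‖t‖ = 0`). -/
noncomputable def minOneInv (H t : ℝ) : ℝ :=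
  if distNearestInt t = 0 then 1 else min 1 (1 / (H * distNearestInt t))

open Real Finset intervalIntegral MeasureTheory


lemma sin_diff_identity (C D : ℝ) :
    Real.sin (C + D) - Real.sin (C - D) = 2 * Real.cos C * Real.sin D := by
  rw [Real.sin_add, Real.sin_sub]; ring

lemma dirichlet_kernel_mul (H : ℕ) (x : ℝ) :
    (1 + 2 * ∑ h ∈ Finset.range H, Real.cos (2*π*(h+1)*x)) * Real.sin (π*x)
      = Real.sin ((2*H+1)*(π*x)) := by
  induction H with
  | zero => norm_num
  | succ n ih =>
      rw [Finset.sum_range_succ]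
      have key := sin_diff_identity (2*π*((n:ℝ)+1)*x) (π*x)
      push_cast
      push_cast at ih
      have e1 : (2*((n:ℝ)+1)+1)*(π*x) = 2*π*((n:ℝ)+1)*x + π*x := by ring
      have e2 : (2*(n:ℝ)+1)*(π*x) = 2*π*((n:ℝ)+1)*x - π*x := by ring
      rw [e1]
      rw [e2] at ih
      linarith [key]

lemma dirichlet_kernel (H : ℕ) (x : ℝ) (hx : Real.sin (π * x) ≠ 0) :
    1 + 2 * ∑ h ∈ Finset.range H, Real.cos (2*π*(h+1)*x)
      = Real.sin ((2*H+1)*(π*x)) / Real.sin (π*x) := by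
  rw [eq_div_iff hx, dirichlet_kernel_mul]

noncomputable def Fsaw (H : ℕ) (x : ℝ) : ℝ :=
  x - 1/2 + ∑ h ∈ Finset.range H, Real.sin (2*π*(h+1)*x) / (π*(h+1))

lemma hasDerivAt_Fsaw (H : ℕ) (x : ℝ) :
    HasDerivAt (Fsaw H) (1 + 2 * ∑ h ∈ Finset.range H, Real.cos (2*π*(h+1)*x)) x := by
  have hterm : ∀ h : ℕ, HasDerivAt (fun y => Real.sin (2*π*(h+1)*y) / (π*(h+1)))
      (2 * Real.cos (2*π*(h+1)*x)) x := by
    intro h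
    have h1 : HasDerivAt (fun y : ℝ => 2*π*(h+1)*y) (2*π*(h+1)) x := by
      simpa using (hasDerivAt_id x).const_mul (2*π*((h:ℝ)+1))
    have h2 := (h1.sin).div_const (π*((h:ℝ)+1))
    refine h2.congr_deriv ?_
    have : π * ((h:ℝ)+1) ≠ 0 := by positivity
    rw [div_eq_iff this]
    ring
  have hsum : HasDerivAt (fun y => ∑ h ∈ Finset.range H, Real.sin (2*π*(h+1)*y) / (π*(h+1)))
      (∑ h ∈ Finset.range H, 2 * Real.cos (2*π*(h+1)*x)) x :=
    HasDerivAt.fun_sum fun h _ => hterm h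
  have hlin : HasDerivAt (fun y : ℝ => y - 1/2) 1 x := (hasDerivAt_id x).sub_const _
  have := hlin.add hsum
  rw [Finset.mul_sum]
  exact this

lemma sin_pi_pos_on {u x : ℝ} (hu : 0 < u) (hx : x ∈ Set.Icc u (1/2:ℝ)) :
    0 < Real.sin (π * x) := by
  apply Real.sin_pos_of_pos_of_lt_pi
  · have := hx.1; nlinarith [Real.pi_pos]
  · have := hx.2; nlinarith [Real.pi_gt_three]

lemma Fsaw_eq_integral (H : ℕ) (u : ℝ) (hu : 0 < u) (hu2 : u ≤ 1/2) :
    Fsaw H u = -∫ x in u..(1/2), Real.sin ((2*H+1)*(π*x)) / Real.sin (π*x) := by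
  have hcont : Continuous fun x : ℝ => 1 + 2 * ∑ h ∈ Finset.range H, Real.cos (2*π*(h+1)*x) := by
    continuity
  have h1 : ∫ x in u..(1/2), (1 + 2 * ∑ h ∈ Finset.range H, Real.cos (2*π*(h+1)*x))
      = Fsaw H (1/2) - Fsaw H u :=
    intervalIntegral.integral_eq_sub_of_hasDerivAt (fun x _ => hasDerivAt_Fsaw H x)
      (hcont.intervalIntegrable _ _)
  have hF12 : Fsaw H (1/2 : ℝ) = 0 := by
    rw [Fsaw]
    rw [Finset.sum_eq_zero]
    · norm_num
    intro h _
    rw [show 2*π*((h:ℝ)+1)*(1/2:ℝ) = ((h+1:ℕ):ℝ)*π by push_cast; ring, Real.sin_nat_mul_pi]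
    simp
  have hcong : ∫ x in u..(1/2), (1 + 2 * ∑ h ∈ Finset.range H, Real.cos (2*π*(h+1)*x))
      = ∫ x in u..(1/2), Real.sin ((2*H+1)*(π*x)) / Real.sin (π*x) := by
    apply intervalIntegral.integral_congr
    intro x hx
    rw [Set.uIcc_of_le hu2] at hx
    exact dirichlet_kernel H x (ne_of_gt (sin_pi_pos_on hu hx))
  rw [← hcong, h1, hF12]
  ring

lemma osc_bound (c : ℝ) (hc : 0 < c) (u : ℝ) (hu : 0 < u) (hu2 : u ≤ 1/2) :
    |∫ x in u..(1/2), Real.sin (c*x) / Real.sin (π*x)| ≤ 2 / (c * Real.sin (π*u)) := by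
  set b : ℝ → ℝ := fun x => (Real.sin (π*x))⁻¹ with hb
  set b' : ℝ → ℝ := fun x => -(Real.cos (π*x) * π) / (Real.sin (π*x))^2 with hb'
  set a : ℝ → ℝ := fun x => -Real.cos (c*x) / c with ha
  have hsin : ∀ x ∈ Set.Icc u (1/2:ℝ), 0 < Real.sin (π*x) := fun x hx => sin_pi_pos_on hu hx
  have huIcc : Set.uIcc u (1/2:ℝ) = Set.Icc u (1/2) := Set.uIcc_of_le hu2
  have hbderiv : ∀ x ∈ Set.Icc u (1/2:ℝ), HasDerivAt b (b' x) x := by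
    intro x hx
    have h1 : HasDerivAt (fun y : ℝ => Real.sin (π*y)) (Real.cos (π*x) * π) x := by
      simpa using ((hasDerivAt_id x).const_mul π).sin
    have := h1.inv (ne_of_gt (hsin x hx)); exact this
  have haderiv : ∀ x : ℝ, HasDerivAt a (Real.sin (c*x)) x := by
    intro x
    have h1 : HasDerivAt (fun y : ℝ => Real.cos (c*y)) (-Real.sin (c*x) * c) x := by
      simpa using ((hasDerivAt_id x).const_mul c).cos
    have h2 := (h1.neg).div_const c
    exact h2.congr_deriv (by rw [div_eq_iff hc.ne']; ring)
  have hbcont : ContinuousOn b (Set.Icc u (1/2)) := by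
    apply ContinuousOn.inv₀
    · exact Continuous.continuousOn (by fun_prop)
    · exact fun x hx => ne_of_gt (hsin x hx)
  have hb'cont : ContinuousOn b' (Set.Icc u (1/2)) := by
    apply ContinuousOn.div
    · exact Continuous.continuousOn (by fun_prop)
    · exact Continuous.continuousOn (by fun_prop)
    · exact fun x hx => pow_ne_zero _ (ne_of_gt (hsin x hx))
  have hb'int : IntervalIntegrable b' MeasureTheory.volume u (1/2) :=
    (huIcc ▸ hb'cont).intervalIntegrable
  have hsinint : IntervalIntegrable (fun x => Real.sin (c*x)) MeasureTheory.volume u (1/2) :=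
    (Continuous.intervalIntegrable (by fun_prop) _ _)
  have ibp := intervalIntegral.integral_mul_deriv_eq_deriv_mul
    (u := b) (u' := b') (v := a) (v' := fun x => Real.sin (c*x))
    (fun x hx => hbderiv x (huIcc ▸ hx)) (fun x _ => haderiv x) hb'int hsinint
  have hinteq : ∫ x in u..(1/2:ℝ), Real.sin (c*x) / Real.sin (π*x)
      = ∫ x in u..(1/2:ℝ), b x * Real.sin (c*x) := by
    apply intervalIntegral.integral_congr
    intro x _
    simp [hb, div_eq_inv_mul]
  rw [hinteq, ibp]
  have hsu : 0 < Real.sin (π*u) := hsin u ⟨le_refl u, hu2⟩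
  set B : ℝ := (Real.sin (π*u))⁻¹ with hBdef
  have hB1 : 1 ≤ B := (one_le_inv₀ hsu).mpr (Real.sin_le_one _)
  have hb12 : b (1/2 : ℝ) = 1 := by
    show (Real.sin (π * (1/2:ℝ)))⁻¹ = 1
    rw [show π * (1/2 : ℝ) = π/2 by ring, Real.sin_pi_div_two, inv_one]
  have habs_a : ∀ x : ℝ, |a x| ≤ 1/c := by
    intro x
    rw [ha]
    rw [abs_div, abs_of_pos hc]
    gcongr
    rw [abs_neg]
    exact Real.abs_cos_le_one _
  have hb'nonpos : ∀ x ∈ Set.Icc u (1/2:ℝ), b' x ≤ 0 := by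
    intro x hx
    rw [hb']
    apply div_nonpos_of_nonpos_of_nonneg
    · have hcos : 0 ≤ Real.cos (π*x) := by
        apply Real.cos_nonneg_of_mem_Icc
        constructor
        · nlinarith [Real.pi_pos, hx.1, hu.le]
        · nlinarith [Real.pi_pos, hx.2]
      nlinarith [Real.pi_pos]
    · positivity
  have hIntNeg : ∫ x in u..(1/2:ℝ), (-(b' x)) = b u - b (1/2) := by
    have hft := intervalIntegral.integral_eq_sub_of_hasDerivAt
      (f := fun y => -(b y)) (f' := fun y => -(b' y))
      (fun x hx => (hbderiv x (huIcc ▸ hx)).neg)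
      ((huIcc ▸ hb'cont.neg).intervalIntegrable)
    rw [hft]
    ring
  have habsint : |∫ x in u..(1/2:ℝ), b' x * a x| ≤ (B - 1)/c := by
    have s1 : |∫ x in u..(1/2:ℝ), b' x * a x| ≤ ∫ x in u..(1/2:ℝ), |b' x * a x| :=
      intervalIntegral.abs_integral_le_integral_abs hu2
    have s2 : ∫ x in u..(1/2:ℝ), |b' x * a x| ≤ ∫ x in u..(1/2:ℝ), (-(b' x)) * (1/c) := by
      apply intervalIntegral.integral_mono_on hu2
      · exact ((huIcc ▸ hb'cont).mul (Continuous.continuousOn (by fun_prop))).abs.intervalIntegrable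
      · exact ((huIcc ▸ hb'cont.neg).mul continuousOn_const).intervalIntegrable
      · intro x hx
        rw [abs_mul]
        have h1 : |b' x| = -(b' x) := abs_of_nonpos (hb'nonpos x hx)
        rw [h1]
        have := habs_a x
        have h2 : 0 ≤ -(b' x) := neg_nonneg.mpr (hb'nonpos x hx)
        exact mul_le_mul_of_nonneg_left (this) h2
    have s3 : ∫ x in u..(1/2:ℝ), (-(b' x)) * (1/c) = (b u - b (1/2)) * (1/c) := by
      rw [intervalIntegral.integral_mul_const, hIntNeg]
    rw [s3] at s2
    rw [hb12] at s2
    have : (B - 1) * (1/c) = (B-1)/c := by ring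
    calc |∫ x in u..(1/2:ℝ), b' x * a x| ≤ (b u - 1) * (1/c) := le_trans s1 s2
      _ = (B - 1)/c := by rw [hb]; simp only [hBdef]; ring
  have hXY : |b (1/2) * a (1/2) - b u * a u| ≤ 1/c + B/c := by
    have h1 : |b (1/2) * a (1/2)| ≤ 1/c := by
      rw [hb12, one_mul]; exact habs_a _
    have h2 : |b u * a u| ≤ B/c := by
      rw [abs_mul]
      have hbu : |b u| = B := by
        rw [hb]; simp only [hBdef]; rw [abs_of_pos (inv_pos.mpr hsu)]
      rw [hbu]
      calc B * |a u| ≤ B * (1/c) := mul_le_mul_of_nonneg_left (habs_a u) (by linarith)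
        _ = B/c := by ring
    calc |b (1/2) * a (1/2) - b u * a u| ≤ |b (1/2) * a (1/2)| + |b u * a u| := abs_sub _ _
      _ ≤ 1/c + B/c := add_le_add h1 h2
  have hfinal : |b (1/2) * a (1/2) - b u * a u - ∫ x in u..(1/2:ℝ), b' x * a x|
      ≤ (1/c + B/c) + (B-1)/c := by
    calc _ ≤ |b (1/2) * a (1/2) - b u * a u| + |∫ x in u..(1/2:ℝ), b' x * a x| := abs_sub _ _
      _ ≤ (1/c + B/c) + (B-1)/c := add_le_add hXY habsint
  have heq : (1/c + B/c) + (B-1)/c = 2*B/c := by ring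
  rw [heq] at hfinal
  have : 2*B/c = 2/(c * Real.sin (π*u)) := by
    rw [hBdef]
    field_simp
  rw [this] at hfinal
  exact hfinal

lemma Fsaw_symm (H : ℕ) (u : ℝ) : Fsaw H (1 - u) = -Fsaw H u := by
  rw [Fsaw, Fsaw, neg_add, ← Finset.sum_neg_distrib]
  congr 1
  · ring
  refine Finset.sum_congr rfl fun h _ => ?_
  have : 2*π*((h:ℝ)+1)*(1-u) = -(2*π*((h:ℝ)+1)*u) + (((h:ℤ)+1 : ℤ) : ℝ) * (2*π) := by
    push_cast; ring
  rw [this, Real.sin_add_int_mul_two_pi, Real.sin_neg]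
  ring

lemma Fsaw_small_bound (H : ℕ) (u : ℝ) :
    |Fsaw H u| ≤ |u - 1/2| + 2 * H * |u - round u| := by
  rw [Fsaw]
  refine (abs_add_le _ _).trans (add_le_add le_rfl ?_)
  refine (Finset.abs_sum_le_sum_abs _ _).trans ?_
  have hterm : ∀ h ∈ Finset.range H, |Real.sin (2*π*(h+1)*u) / (π*(h+1))| ≤ 2 * |u - round u| := by
    intro h _
    have hd : 0 < π*((h:ℝ)+1) := by positivity
    rw [abs_div, abs_of_pos hd]
    rw [div_le_iff₀ hd]
    have key : Real.sin (2*π*((h:ℝ)+1)*u) = Real.sin (2*π*((h:ℝ)+1)*(u - round u)) := by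
      have e : 2*π*((h:ℝ)+1)*u = 2*π*((h:ℝ)+1)*(u - round u)
          + ((((h:ℤ)+1) * round u : ℤ) : ℝ) * (2*π) := by
        push_cast; ring
      rw [e, Real.sin_add_int_mul_two_pi]
    rw [key]
    calc |Real.sin (2*π*((h:ℝ)+1)*(u - round u))| ≤ |2*π*((h:ℝ)+1)*(u - round u)| :=
          Real.abs_sin_le_abs
      _ = 2*π*((h:ℝ)+1)*|u - round u| := by
          rw [abs_mul, abs_of_pos (by positivity : (0:ℝ) < 2*π*((h:ℝ)+1))]
      _ ≤ 2 * |u - round u| * (π*((h:ℝ)+1)) := by ring_nf; exact le_rfl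
  calc ∑ h ∈ Finset.range H, |Real.sin (2*π*(h+1)*u) / (π*(h+1))|
      ≤ ∑ _h ∈ Finset.range H, 2 * |u - round u| := Finset.sum_le_sum hterm
    _ = 2 * H * |u - round u| := by rw [Finset.sum_const, Finset.card_range]; ring


lemma sum_Icc_int_eq_range (M : Type*) [AddCommMonoid M] (f : ℤ → M) (H : ℕ) :
    ∑ h ∈ Finset.Icc (1:ℤ) (H:ℤ), f h = ∑ h ∈ Finset.range H, f (h+1) := by
  refine Finset.sum_nbij' (f := f) (g := fun h : ℕ => f ((h:ℤ)+1))
    (fun h => (h - 1).toNat) (fun h => (h:ℤ)+1) ?_ ?_ ?_ ?_ ?_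
  · intro a ha; simp only [Finset.mem_Icc, Finset.mem_range] at *; omega
  · intro a ha; simp only [Finset.mem_Icc, Finset.mem_range] at *; omega
  · intro a ha; simp only [Finset.mem_Icc, Finset.mem_range] at *; omega
  · intro a ha; simp only [Finset.mem_Icc, Finset.mem_range] at *; omega
  · intro a ha; simp only [Finset.mem_Icc, Finset.mem_range] at ha
    beta_reduce; congr 1; omega

lemma sum_sym_split (g : ℤ → ℂ) (H : ℕ) :
    ∑ h ∈ (Finset.Icc (-(H:ℤ)) (H:ℤ)) \ {0}, g h
      = ∑ h ∈ Finset.Icc (1:ℤ) (H:ℤ), (g h + g (-h)) := by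
  have hset : (Finset.Icc (-(H:ℤ)) (H:ℤ)) \ {0}
      = Finset.Icc (1:ℤ) (H:ℤ) ∪ Finset.Icc (-(H:ℤ)) (-1) := by
    ext x; simp only [Finset.mem_sdiff, Finset.mem_Icc, Finset.mem_union,
      Finset.mem_singleton]; omega
  rw [hset, Finset.sum_union (by
      rw [Finset.disjoint_left]; intro a ha hb
      simp only [Finset.mem_Icc] at *; omega), Finset.sum_add_distrib]
  congr 1
  refine Finset.sum_nbij' (fun h : ℤ => -h) (fun h : ℤ => -h) ?_ ?_ ?_ ?_ ?_ <;>
    intro a ha <;> simp only [Finset.mem_Icc] at * <;> first | omega | simp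

lemma exp_pair (θ : ℝ) (h : ℤ) (hh : h ≠ 0) :
    Complex.exp (2 * π * Complex.I * (θ:ℂ)) / (h:ℂ)
      + Complex.exp (2 * π * Complex.I * ((-θ:ℝ):ℂ)) / ((-h:ℤ):ℂ)
      = 2 * Complex.I * (Real.sin (2*π*θ) : ℂ) / (h:ℂ) := by
  have e1 : (2:ℂ) * π * Complex.I * (θ:ℂ) = ((2*π*θ : ℝ):ℂ) * Complex.I := by
    push_cast; ring
  have e2 : (2:ℂ) * π * Complex.I * ((-θ:ℝ):ℂ) = (-((2*π*θ : ℝ):ℂ)) * Complex.I := by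
    push_cast; ring
  rw [e1, e2, Complex.exp_mul_I, Complex.exp_mul_I]
  have : ((-h:ℤ):ℂ) = -(h:ℂ) := by push_cast; ring
  rw [this, Complex.cos_neg, Complex.sin_neg]
  have hc : (h:ℂ) ≠ 0 := by exact_mod_cast hh
  rw [← Complex.ofReal_sin, div_neg, ← neg_div, ← add_div]
  congr 1
  ring

lemma lhs_is_real (H : ℕ) (t : ℝ) :
    ((Int.fract t - 1 / 2 : ℝ) : ℂ) +
        (1 / (2 * Real.pi * Complex.I)) *
          ∑ h ∈ (Finset.Icc (-(H : ℤ)) (H : ℤ)) \ {0},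
            Complex.exp (2 * Real.pi * Complex.I * ((h : ℝ) * t : ℝ)) / (h : ℂ)
      = ((Fsaw H (Int.fract t) : ℝ) : ℂ) := by
  rw [sum_sym_split]
  have hterm : ∀ h ∈ Finset.Icc (1:ℤ) (H:ℤ),
      (Complex.exp (2 * Real.pi * Complex.I * ((h : ℝ) * t : ℝ)) / (h : ℂ)
        + Complex.exp (2 * Real.pi * Complex.I * (((-h : ℤ) : ℝ) * t : ℝ)) / ((-h:ℤ) : ℂ))
      = 2 * Complex.I * (Real.sin (2*π*((h:ℝ)*t)) : ℂ) / (h:ℂ) := by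
    intro h hh
    simp only [Finset.mem_Icc] at hh
    have e := exp_pair ((h:ℝ)*t) h (by omega)
    rw [show ((-(((h:ℝ)*t)) : ℝ) : ℂ) = ((((-h:ℤ):ℝ) * t : ℝ) : ℂ) by push_cast; ring] at e
    exact e
  rw [Finset.sum_congr rfl hterm, sum_Icc_int_eq_range, Fsaw, Finset.mul_sum]
  push_cast
  congr 1
  refine Finset.sum_congr rfl fun x _ => ?_
  have hx1 : ((x:ℝ)+1) ≠ 0 := by positivity
  have key : 2*π*(((x:ℝ)+1)*t) = 2*π*(((x:ℝ)+1)*Int.fract t) + ((((x:ℤ)+1)*⌊t⌋ : ℤ):ℝ)*(2*π) := by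
    push_cast
    linear_combination (-(2*π*((x:ℝ)+1))) * (Int.floor_add_fract t)
  have hsinreal : Real.sin (2*π*(((x:ℝ)+1)*t)) = Real.sin (2*π*(((x:ℝ)+1)*Int.fract t)) := by
    rw [key, Real.sin_add_int_mul_two_pi]
  have h1 : (2 * (π:ℂ) * (((x:ℂ) + 1) * (t:ℂ))) = ((2*π*(((x:ℝ)+1)*t) : ℝ) : ℂ) := by
    push_cast; ring
  have h2 : (2 * (π:ℂ) * ((x:ℂ) + 1) * ((Int.fract t:ℝ):ℂ)) = ((2*π*(((x:ℝ)+1)*Int.fract t) : ℝ) : ℂ) := by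
    push_cast; ring
  rw [h1, h2, ← Complex.ofReal_sin, ← Complex.ofReal_sin, hsinreal]
  have hπ : (π:ℂ) ≠ 0 := by exact_mod_cast Real.pi_ne_zero
  have hxc : ((x:ℂ)+1) ≠ 0 := by exact_mod_cast (show (((x:ℝ)+1 : ℝ):ℂ) ≠ 0 by exact_mod_cast hx1)
  field_simp

lemma dist_fract (t : ℝ) : distNearestInt (Int.fract t) = distNearestInt t := by
  unfold distNearestInt
  conv_rhs => rw [← Int.fract_add_floor t, round_add_intCast]
  push_cast
  congr 1
  ring

lemma dist_eq_min (t : ℝ) :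
    distNearestInt t = min (Int.fract t) (1 - Int.fract t) := by
  rw [← dist_fract]
  unfold distNearestInt
  set u := Int.fract t with hu
  have hu0 : 0 ≤ u := Int.fract_nonneg t
  have hu1 : u < 1 := Int.fract_lt_one t
  rcases lt_or_ge u (1/2) with hc | hc
  · have hr : round u = 0 := by
      rw [round_eq]
      apply Int.floor_eq_zero_iff.mpr
      constructor <;> simp <;> linarith
    rw [hr, min_eq_left (by linarith)]
    push_cast
    rw [sub_zero, abs_of_nonneg hu0]
  · have hr : round u = 1 := by
      rw [round_eq]
      have : ⌊u + 1/2⌋ = 1 := by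
        apply Int.floor_eq_iff.mpr <;> constructor <;> push_cast <;> linarith
      exact this
    rw [hr, min_eq_right (by linarith)]
    push_cast
    rw [abs_of_nonpos (by linarith), neg_sub]

lemma Fsaw_large_bound (H : ℕ) (hH : 1 ≤ H) (u : ℝ) (hu : 0 < u) (hu2 : u ≤ 1/2) :
    |Fsaw H u| ≤ 1 / ((H:ℝ) * u) := by
  have hc : (0:ℝ) < (2*H+1)*π := by positivity
  rw [Fsaw_eq_integral H u hu hu2, abs_neg]
  have hcong : ∫ x in u..(1/2:ℝ), Real.sin ((2*H+1)*(π*x)) / Real.sin (π*x)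
      = ∫ x in u..(1/2:ℝ), Real.sin (((2*H+1)*π)*x) / Real.sin (π*x) := by
    apply intervalIntegral.integral_congr
    intro x _
    simp only [mul_assoc]
  rw [hcong]
  refine (osc_bound ((2*H+1)*π) hc u hu hu2).trans ?_
  have hsin : 2*u ≤ Real.sin (π*u) := by
    have := Real.mul_le_sin (x := π*u) (by positivity) (by nlinarith)
    calc 2*u = 2/π * (π*u) := by field_simp
      _ ≤ Real.sin (π*u) := this
  have hsinpos : 0 < Real.sin (π*u) := by linarith
  have hHu : (0:ℝ) < (H:ℝ)*u := by
    have : (0:ℝ) < (H:ℝ) := by exact_mod_cast Nat.pos_of_ne_zero (by omega)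
    positivity
  rw [div_le_div_iff₀ (by positivity) hHu]
  have hπ : 3 < π := Real.pi_gt_three
  have hH' : (1:ℝ) ≤ (H:ℝ) := by exact_mod_cast hH
  nlinarith [mul_le_mul_of_nonneg_left hsin (by positivity : (0:ℝ) ≤ (2*(H:ℝ)+1)*π)]

/-- for `H ≥ 2` and `t ∈ ℝ`,
`ψ(t) = -(1/(2πi)) Σ_{1 ≤ |h| ≤ H} e(ht)/h + O(min{1, 1/(H‖t‖)})`, with `ψ(t) = {t} - 1/2`. -/
theorem sawtooth_expansion : ∃ C : ℝ, 0 < C ∧ ∀ H : ℕ, 2 ≤ H → ∀ t : ℝ,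
    ‖((Int.fract t - 1 / 2 : ℝ) : ℂ) +
        (1 / (2 * Real.pi * Complex.I)) *
          ∑ h ∈ (Finset.Icc (-(H : ℤ)) (H : ℤ)) \ {0},
            Complex.exp (2 * Real.pi * Complex.I * ((h : ℝ) * t : ℝ)) / (h : ℂ)‖ ≤
      C * minOneInv H t := by
  refine ⟨3, by norm_num, fun H hH t => ?_⟩
  rw [lhs_is_real, Complex.norm_real, Real.norm_eq_abs]
  set u := Int.fract t with hudef
  have hu0 : 0 ≤ u := Int.fract_nonneg t
  have hu1 : u < 1 := Int.fract_lt_one t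
  set δ := distNearestInt t with hδdef
  have hδmin : δ = min u (1 - u) := dist_eq_min t
  have hδ0 : 0 ≤ δ := by rw [hδmin]; simp [le_min_iff]; constructor <;> [linarith; linarith]
  have hHpos : (0:ℝ) < (H:ℝ) := by exact_mod_cast Nat.pos_of_ne_zero (by omega)
  by_cases hsmall : (H:ℝ) * δ ≤ 1
  · have hmin : minOneInv H t = 1 := by
      unfold minOneInv
      rw [← hδdef]
      split_ifs with h
      · rfl
      · have hδpos : 0 < δ := lt_of_le_of_ne hδ0 (Ne.symm h)
        rw [min_eq_left]
        have : 0 < (H:ℝ)*δ := by positivity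
        rw [le_div_iff₀ this]
        linarith
    rw [hmin, mul_one]
    have hb := Fsaw_small_bound H u
    have h1 : |u - round u| = δ := by
      rw [show |u - (round u : ℝ)| = distNearestInt u from rfl, hudef, dist_fract]
    have h2 : |u - 1/2| ≤ 1/2 := abs_le.mpr ⟨by linarith, by linarith⟩
    rw [h1] at hb
    nlinarith
  · push_neg at hsmall
    have hδpos : 0 < δ := by nlinarith
    have hmin : minOneInv H t = 1 / ((H:ℝ)*δ) := by
      unfold minOneInv
      rw [← hδdef, if_neg (ne_of_gt hδpos), min_eq_right]
      rw [div_le_one (by positivity)]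
      linarith
    rw [hmin]
    have hgoal : ∀ v : ℝ, 0 < v → v ≤ 1/2 → v = δ → |Fsaw H v| ≤ 3 * (1 / ((H:ℝ)*δ)) := by
      intro v hv hv2 hvδ
      have := Fsaw_large_bound H (by omega) v hv hv2
      rw [hvδ] at this ⊢
      have h1 : (0:ℝ) < (H:ℝ)*δ := by positivity
      nlinarith [this, one_div_pos.mpr h1]
    rcases le_or_gt u (1/2) with hc | hc
    · have huδ : u = δ := by rw [hδmin, min_eq_left (by linarith)]
      have hupos : 0 < u := by rw [huδ]; exact hδpos
      exact hgoal u hupos hc huδ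
    · have hvδ : 1 - u = δ := by rw [hδmin, min_eq_right (by linarith)]
      have hvpos : 0 < 1 - u := by rw [hvδ]; exact hδpos
      have hsym : |Fsaw H u| = |Fsaw H (1-u)| := by
        rw [show u = 1 - (1-u) by ring, Fsaw_symm, abs_neg]
        ring_nf
      rw [hsym]
      exact hgoal (1-u) hvpos (by linarith) hvδ
end

section
/- Let H ≥ 2. The function t ↦ min{1, 1/(H‖t‖)} admits a Fourier expansion Σ_{h ∈ ℤ} b_h e(ht) with coefficients satisfying |b_h| ≤ C · min{ (log H)/H , H/h² } for h ≠ 0 and |b_0| ≤ C (log H)/H, for an absolute constant C. -/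
open MeasureTheory intervalIntegral Real Set

attribute [local instance] ZeroLEOneClass.factZeroLtOne

namespace MOI

noncomputable def g (H t : ℝ) : ℝ := 1 / max (H * |t - round t|) 1

lemma g_eq {H : ℝ} (hH : 2 ≤ H) (t : ℝ) : minOneInv H t = g H t := by
  unfold minOneInv g distNearestInt
  have h0 : (0:ℝ) < H := by linarith
  rcases eq_or_ne (|t - round t|) 0 with h | h
  · simp [h]
  · have hd : 0 < |t - round t| := lt_of_le_of_ne (abs_nonneg _) (Ne.symm h)
    rw [if_neg h]
    rcases le_total (H * |t - round t|) 1 with hle | hle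
    · rw [max_eq_right hle, div_one]
      have : (1:ℝ) ≤ 1 / (H * |t - round t|) := by
        rw [le_div_iff₀ (by positivity : (0:ℝ) < H * |t - round t|), one_mul]; exact hle
      rw [min_eq_left this]
    · rw [max_eq_left hle]
      have : 1 / (H * |t - round t|) ≤ 1 := by
        rw [div_le_one (by positivity)]; exact hle
      rw [min_eq_right this]

lemma g_nonneg {H : ℝ} (t : ℝ) : 0 ≤ g H t := by
  unfold g
  have : (1:ℝ) ≤ max (H * |t - round t|) 1 := le_max_right _ _
  positivity

noncomputable def F (H : ℝ) : C(AddCircle (1:ℝ), ℂ) :=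
  ⟨fun x => ((1 / max (H * ‖x‖) 1 : ℝ) : ℂ), by
    have : Continuous fun x : AddCircle (1:ℝ) => (1 / max (H * ‖x‖) 1 : ℝ) := by
      apply continuous_const.div
      · fun_prop
      · intro x
        have : (1:ℝ) ≤ max (H * ‖x‖) 1 := le_max_right _ _
        positivity
    exact Complex.continuous_ofReal.comp this⟩

lemma F_apply {H : ℝ} (t : ℝ) : F H ((t : ℝ) : AddCircle (1:ℝ)) = ((g H t : ℝ) : ℂ) := by
  have : ‖((t : ℝ) : AddCircle (1:ℝ))‖ = |t - round t| := UnitAddCircle.norm_eq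
  simp only [F, ContinuousMap.coe_mk, this, g]

lemma g_cont {H : ℝ} : Continuous fun t : ℝ => ((g H t : ℝ) : ℂ) := by
  have key : (fun t : ℝ => ((g H t : ℝ) : ℂ)) = fun t : ℝ => F H ((t : ℝ) : AddCircle (1:ℝ)) :=
    funext fun t => (F_apply t).symm
  rw [key]
  exact (F H).continuous.comp (AddCircle.continuous_mk' 1)

lemma g_contR {H : ℝ} : Continuous (g H) := by
  have : (g H) = fun t => ((g H t : ℝ) : ℂ).re := by funext t; simp
  rw [this]; exact Complex.continuous_re.comp g_cont

lemma b_eq {H : ℝ} (n : ℤ) : fourierCoeff (⇑(F H)) n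
    = ∫ t in (-(1/2):ℝ)..(1/2), Complex.exp (2*π*Complex.I*(-n:ℤ)*t) * (g H t : ℂ) := by
  rw [fourierCoeff_eq_intervalIntegral (F H) n (-(1/2))]
  have h1 : -(1/2:ℝ) + 1 = 1/2 := by norm_num
  rw [h1]
  norm_num
  refine intervalIntegral.integral_congr fun x hx => ?_
  rw [F_apply]
  rw [← Complex.exp_conj]
  congr 1
  simp only [map_mul, Complex.conj_I, Complex.conj_ofReal, map_ofNat, map_intCast]
  ring

lemma abs_sub_round {t : ℝ} (h1 : -(1/2) ≤ t) (h2 : t ≤ 1/2) : |t - round t| = |t| := by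
  rcases lt_or_eq_of_le h2 with h | h
  · rw [show round t = 0 from round_eq_zero_iff.mpr ⟨h1, h⟩]
    simp
  · subst h
    norm_num [round_eq]

section pieces
variable {H : ℝ}

lemma Hpos (hH : 2 ≤ H) : (0:ℝ) < H := by linarith
lemma invH_le (hH : 2 ≤ H) : (1/H : ℝ) ≤ 1/2 := by
  rw [div_le_div_iff₀ (Hpos hH) (by norm_num)]; linarith
lemma invH_pos (hH : 2 ≤ H) : (0:ℝ) < 1/H := by have := Hpos hH; positivity

lemma g_mid (hH : 2 ≤ H) {t : ℝ} (h1 : -(1/H) ≤ t) (h2 : t ≤ 1/H) : g H t = 1 := by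
  have hH2 := invH_le hH
  have habs : |t - round t| = |t| := abs_sub_round (by linarith) (by linarith)
  have habs2 : |t| ≤ 1/H := abs_le.mpr ⟨h1, h2⟩
  have : H * |t - round t| ≤ 1 := by
    rw [habs]
    calc H * |t| ≤ H * (1/H) := by
          exact mul_le_mul_of_nonneg_left habs2 (le_of_lt (Hpos hH))
    _ = 1 := by field_simp
  unfold g
  rw [max_eq_right this]
  norm_num

lemma g_right (hH : 2 ≤ H) {t : ℝ} (h1 : 1/H ≤ t) (h2 : t ≤ 1/2) : g H t = 1/(H*t) := by
  have h0 := Hpos hH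
  have ht0 : 0 < t := lt_of_lt_of_le (invH_pos hH) h1
  have habs : |t - round t| = |t| := abs_sub_round (by linarith [invH_pos hH]) h2
  have h1' : (1:ℝ) ≤ H * t := by
    rw [show (1:ℝ) = H * (1/H) by field_simp]
    exact mul_le_mul_of_nonneg_left h1 (le_of_lt h0)
  unfold g
  rw [habs, abs_of_pos ht0, max_eq_left h1']

lemma g_left (hH : 2 ≤ H) {t : ℝ} (h1 : -(1/2) ≤ t) (h2 : t ≤ -(1/H)) : g H t = 1/(H*(-t)) := by
  have h0 := Hpos hH
  have ht0 : t < 0 := lt_of_le_of_lt h2 (by simpa using invH_pos hH)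
  have habs : |t - round t| = |t| := abs_sub_round h1 (by linarith [invH_pos hH])
  have h1' : (1:ℝ) ≤ H * (-t) := by
    rw [show (1:ℝ) = H * (1/H) by field_simp]
    refine mul_le_mul_of_nonneg_left ?_ (le_of_lt h0)
    linarith
  unfold g
  rw [habs, abs_of_neg ht0, max_eq_left h1']

end pieces


noncomputable def I0 (H : ℝ) : ℝ := 2/H + 2*(Real.log (H/2))/H

lemma integral_g (hH : 2 ≤ H) : (∫ t in (-(1/2):ℝ)..(1/2), g H t) = I0 H := by
  have h0 := Hpos hH
  have hia : (1/H : ℝ) ≤ 1/2 := invH_le hH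
  have hip : (0:ℝ) < 1/H := invH_pos hH
  have hint : ∀ a b : ℝ, IntervalIntegrable (g H) volume a b :=
    fun a b => g_contR.intervalIntegrable a b
  rw [← intervalIntegral.integral_add_adjacent_intervals (a := -(1/2)) (b := 1/H) (c := 1/2)
      (hint _ _) (hint _ _),
    ← intervalIntegral.integral_add_adjacent_intervals (a := -(1/2)) (b := -(1/H)) (c := 1/H)
      (hint _ _) (hint _ _)]
  have hmid : (∫ t in (-(1/H) : ℝ)..(1/H), g H t) = 2/H := by
    rw [intervalIntegral.integral_congr (g := fun _ => (1:ℝ))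
      (fun x hx => by
        rw [uIcc_of_le (by linarith)] at hx
        exact g_mid hH hx.1 hx.2)]
    simp
    ring
  have hval : (1/H : ℝ)⁻¹ / (1/2 : ℝ)⁻¹ ≠ 0 := by positivity
  have hright : (∫ t in (1/H : ℝ)..(1/2), g H t) = Real.log (H/2) / H := by
    rw [intervalIntegral.integral_congr (g := fun t => (1/H) * t⁻¹)
      (fun x hx => by
        rw [uIcc_of_le hia] at hx
        rw [g_right hH hx.1 hx.2]
        have hx0 : 0 < x := lt_of_lt_of_le hip hx.1
        field_simp)]
    rw [intervalIntegral.integral_const_mul, integral_inv (by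
      rw [uIcc_of_le hia]
      intro hmem
      exact absurd hmem.1 (by linarith))]
    rw [show (1/2 : ℝ) / (1/H) = H/2 by field_simp]
    ring
  have hleft : (∫ t in (-(1/2) : ℝ)..(-(1/H)), g H t) = Real.log (H/2) / H := by
    have h1 : (∫ t in (1/H : ℝ)..(1/2), g H (-t)) = ∫ t in (-(1/2) : ℝ)..(-(1/H)), g H t := by
      simpa using intervalIntegral.integral_comp_neg (a := 1/H) (b := 1/2) (f := fun t => g H t)
    rw [← h1]
    rw [intervalIntegral.integral_congr (g := fun t => g H t)
      (fun x hx => by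
        rw [uIcc_of_le hia] at hx
        obtain ⟨ha, hb⟩ := hx
        have hx0 : 0 < x := lt_of_lt_of_le hip ha
        show g H (-x) = g H x
        rw [g_left hH (by linarith) (by linarith), g_right hH ha hb, neg_neg])]
    exact hright
  rw [hmid, hright, hleft]
  unfold I0
  ring

lemma b_zero (hH : 2 ≤ H) : fourierCoeff (⇑(F H)) 0 = ((I0 H : ℝ) : ℂ) := by
  rw [b_eq 0, ← integral_g hH, ← intervalIntegral.integral_ofReal]
  refine intervalIntegral.integral_congr fun x hx => ?_
  norm_num

lemma norm_b_le (hH : 2 ≤ H) (n : ℤ) : ‖fourierCoeff (⇑(F H)) n‖ ≤ I0 H := by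
  rw [b_eq n]
  refine le_trans (intervalIntegral.norm_integral_le_integral_norm (by norm_num)) ?_
  rw [← integral_g hH]
  refine le_of_eq (intervalIntegral.integral_congr fun x hx => ?_)
  rw [norm_mul]
  have harg : (2*(π:ℂ)*Complex.I*(-n:ℤ)*(x:ℝ)) = ((-(2*π*n*x) : ℝ) : ℂ) * Complex.I := by
    push_cast; ring
  rw [harg, Complex.norm_exp_ofReal_mul_I, one_mul,
    Complex.norm_real, Real.norm_eq_abs, abs_of_nonneg (g_nonneg x)]

lemma I0_nonneg (hH : 2 ≤ H) : 0 ≤ I0 H := by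
  have := norm_b_le hH 0
  have h := norm_nonneg (fourierCoeff (⇑(F H)) 0)
  linarith

lemma I0_le (hH : 2 ≤ H) : I0 H ≤ 6 * Real.log H / H := by
  have h0 := Hpos hH
  have hlog2 : (0.6931471803 : ℝ) < Real.log 2 := Real.log_two_gt_d9
  have hlogH : Real.log 2 ≤ Real.log H := Real.log_le_log (by norm_num) hH
  unfold I0
  rw [Real.log_div (by linarith) (by norm_num)]
  rw [← add_div, div_le_div_iff₀ h0 h0]
  have : 2 + 2*(Real.log H - Real.log 2) ≤ 6 * Real.log H := by nlinarith
  nlinarith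

lemma exp_cont {c : ℂ} : Continuous fun t : ℝ => Complex.exp (c * t) :=
  Complex.continuous_exp.comp (continuous_const.mul Complex.continuous_ofReal)

lemma mid_integral {H : ℝ} (hH : 2 ≤ H) {n : ℤ} (hn : n ≠ 0) :
    (∫ t in (-(1/H))..(1/H), Complex.exp (2*π*Complex.I*(-n:ℤ)*t))
      = ((Real.sin (2*π*n/H) / (π*n) : ℝ) : ℂ) := by
  have hc : (2*(π:ℂ)*Complex.I*(-n:ℤ)) ≠ 0 := by
    simp [Real.pi_ne_zero, Complex.I_ne_zero, hn]
  have h1 := integral_exp_mul_complex (a := -(1/H)) (b := 1/H) hc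
  have h2 : (∫ t in (-(1/H))..(1/H), Complex.exp (2*π*Complex.I*(-n:ℤ)*t))
      = ∫ t in (-(1/H))..(1/H), Complex.exp ((2*(π:ℂ)*Complex.I*(-n:ℤ)) * t) := rfl
  rw [h2, h1]
  set θ : ℝ := 2*π*n/H with hθdef
  have e1 : (2*(π:ℂ)*Complex.I*(-n:ℤ)) * ((1/H : ℝ):ℂ) = ((-θ : ℝ):ℂ) * Complex.I := by
    rw [hθdef]; push_cast; ring
  have e2 : (2*(π:ℂ)*Complex.I*(-n:ℤ)) * ((-(1/H) : ℝ):ℂ) = ((θ : ℝ):ℂ) * Complex.I := by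
    rw [hθdef]; push_cast; ring
  rw [e1, e2, Complex.exp_mul_I, Complex.exp_mul_I]
  have hne : ((n:ℂ)) ≠ 0 := Int.cast_ne_zero.mpr hn
  have hπ : ((π:ℂ)) ≠ 0 := Complex.ofReal_ne_zero.mpr Real.pi_ne_zero
  rw [Complex.ofReal_neg, Complex.cos_neg, Complex.sin_neg]
  rw [hθdef]
  push_cast
  field_simp
  ring

lemma bn_formula {H : ℝ} (hH : 2 ≤ H) {n : ℤ} (hn : n ≠ 0) :
    fourierCoeff (⇑(F H)) n = ((Real.sin (2*π*n/H) / (π*n)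
      + (2/H) * ∫ t in (1/H : ℝ)..(1/2), (1/t) * Real.cos (2*π*n*t) : ℝ) : ℂ) := by
  have h0 := Hpos hH
  have hia : (1/H : ℝ) ≤ 1/2 := invH_le hH
  have hip : (0:ℝ) < 1/H := invH_pos hH
  set c : ℂ := 2*(π:ℂ)*Complex.I*(-n:ℤ) with hcdef
  have hcont : Continuous fun t : ℝ => Complex.exp (2*π*Complex.I*(-n:ℤ)*t) * (g H t : ℂ) :=
    exp_cont.mul g_cont
  have hint : ∀ a b : ℝ, IntervalIntegrable
      (fun t : ℝ => Complex.exp (2*π*Complex.I*(-n:ℤ)*t) * (g H t : ℂ)) volume a b :=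
    fun a b => hcont.intervalIntegrable a b
  rw [b_eq n,
    ← intervalIntegral.integral_add_adjacent_intervals (a := -(1/2)) (b := 1/H) (c := 1/2)
      (hint _ _) (hint _ _),
    ← intervalIntegral.integral_add_adjacent_intervals (a := -(1/2)) (b := -(1/H)) (c := 1/H)
      (hint _ _) (hint _ _)]
  -- continuity facts on [1/H, 1/2]
  have hne0 : ∀ x ∈ uIcc (1/H : ℝ) (1/2), x ≠ 0 := by
    intro x hx
    rw [uIcc_of_le hia] at hx
    exact ne_of_gt (lt_of_lt_of_le hip hx.1)
  have hco : ∀ d : ℂ, ContinuousOn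
      (fun t : ℝ => Complex.exp (d * t) * ((1/(H*t) : ℝ) : ℂ)) (uIcc (1/H : ℝ) (1/2)) := by
    intro d
    refine exp_cont.continuousOn.mul ?_
    refine Complex.continuous_ofReal.comp_continuousOn ?_
    refine continuousOn_const.div ((continuous_const.mul continuous_id).continuousOn) ?_
    intro x hx
    exact mul_ne_zero (ne_of_gt h0) (hne0 x hx)
  -- middle piece
  have hmid : (∫ t in (-(1/H) : ℝ)..(1/H), Complex.exp (2*π*Complex.I*(-n:ℤ)*t) * (g H t : ℂ))
      = ((Real.sin (2*π*n/H) / (π*n) : ℝ) : ℂ) := by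
    rw [← mid_integral hH hn]
    refine intervalIntegral.integral_congr fun x hx => ?_
    rw [uIcc_of_le (by linarith : -(1/H) ≤ (1/H:ℝ))] at hx
    rw [g_mid hH hx.1 hx.2]
    norm_num
  -- right piece
  have hright : (∫ t in (1/H : ℝ)..(1/2), Complex.exp (2*π*Complex.I*(-n:ℤ)*t) * (g H t : ℂ))
      = ∫ t in (1/H : ℝ)..(1/2), Complex.exp (c * t) * ((1/(H*t) : ℝ) : ℂ) := by
    refine intervalIntegral.integral_congr fun x hx => ?_
    rw [uIcc_of_le hia] at hx
    rw [g_right hH hx.1 hx.2]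
  -- left piece
  have hleft : (∫ t in (-(1/2) : ℝ)..(-(1/H)), Complex.exp (2*π*Complex.I*(-n:ℤ)*t) * (g H t : ℂ))
      = ∫ t in (1/H : ℝ)..(1/2), Complex.exp (-c * t) * ((1/(H*t) : ℝ) : ℂ) := by
    have h1 := intervalIntegral.integral_comp_neg (a := 1/H) (b := 1/2)
      (f := fun t : ℝ => Complex.exp (c * t) * ((1/(H*(-t)) : ℝ) : ℂ))
    simp only [neg_neg] at h1
    rw [show -(1/2 : ℝ) = -(1/2 : ℝ) from rfl] at h1
    rw [show (∫ t in (-(1/2) : ℝ)..(-(1/H)),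
        Complex.exp (2*π*Complex.I*(-n:ℤ)*t) * (g H t : ℂ))
      = ∫ t in (-(1/2) : ℝ)..(-(1/H)), Complex.exp (c * t) * ((1/(H*(-t)) : ℝ) : ℂ) from ?_]
    · rw [← h1]
      refine intervalIntegral.integral_congr fun x hx => ?_
      push_cast
      try ring_nf
    · refine intervalIntegral.integral_congr fun x hx => ?_
      rw [uIcc_of_le (by linarith : -(1/2 : ℝ) ≤ -(1/H))] at hx
      rw [g_left hH hx.1 hx.2]
  rw [hmid, hright, hleft, add_right_comm]
  -- combine left and right
  have hsum : (∫ t in (1/H : ℝ)..(1/2), Complex.exp (-c * t) * ((1/(H*t) : ℝ) : ℂ))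
      + (∫ t in (1/H : ℝ)..(1/2), Complex.exp (c * t) * ((1/(H*t) : ℝ) : ℂ))
      = ((∫ t in (1/H : ℝ)..(1/2), (2 * Real.cos (2*π*n*t)) * (1/(H*t)) : ℝ) : ℂ) := by
    rw [← intervalIntegral.integral_add
      ((hco (-c)).intervalIntegrable) ((hco c).intervalIntegrable)]
    rw [← intervalIntegral.integral_ofReal]
    refine intervalIntegral.integral_congr fun x hx => ?_
    have e1 : -c * (x:ℝ) = (((2*π*n*x) : ℝ) : ℂ) * Complex.I := by
      rw [hcdef]; push_cast; ring
    have e2 : c * (x:ℝ) = ((-(2*π*n*x) : ℝ) : ℂ) * Complex.I := by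
      rw [hcdef]; push_cast; ring
    show Complex.exp (-c * x) * _ + Complex.exp (c * x) * _ = _
    rw [e1, e2, Complex.exp_mul_I, Complex.exp_mul_I]
    push_cast
    simp only [Complex.cos_neg, Complex.sin_neg]
    try ring
  rw [hsum]
  rw [show (∫ t in (1/H : ℝ)..(1/2), (2 * Real.cos (2*π*n*t)) * (1/(H*t)))
      = (2/H) * ∫ t in (1/H : ℝ)..(1/2), (1/t) * Real.cos (2*π*n*t) from ?_]
  · push_cast
    ring
  · rw [← intervalIntegral.integral_const_mul]
    refine intervalIntegral.integral_congr fun x hx => ?_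
    have hx0 : x ≠ 0 := hne0 x hx
    field_simp

section IBP
variable {H cr : ℝ}

lemma cont_on_aux (hH : 2 ≤ H) {k : ℕ} (f : ℝ → ℝ) (hf : Continuous f) :
    ContinuousOn (fun t : ℝ => (1/t^k) * f t) (uIcc (1/H : ℝ) (1/2)) := by
  have hia : (1/H : ℝ) ≤ 1/2 := invH_le hH
  have hip : (0:ℝ) < 1/H := invH_pos hH
  refine ContinuousOn.mul ?_ hf.continuousOn
  refine continuousOn_const.div (continuousOn_pow k) ?_
  intro x hx
  rw [uIcc_of_le hia] at hx
  exact pow_ne_zero k (ne_of_gt (lt_of_lt_of_le hip hx.1))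

lemma hg_deriv (x : ℝ) : HasDerivAt (fun y : ℝ => cr * y) cr x := by
  simpa using (hasDerivAt_id x).const_mul cr

lemma J1_ibp (hH : 2 ≤ H) (hcr : cr ≠ 0) :
    (∫ t in (1/H:ℝ)..(1/2), (1/t) * Real.cos (cr*t))
      = 2*(Real.sin (cr*(1/2))/cr) - H*(Real.sin (cr*(1/H))/cr)
        + (1/cr) * ∫ t in (1/H:ℝ)..(1/2), (1/t^2) * Real.sin (cr*t) := by
  have h0 := Hpos hH
  have hia : (1/H : ℝ) ≤ 1/2 := invH_le hH
  have hip : (0:ℝ) < 1/H := invH_pos hH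
  have hne0 : ∀ x ∈ uIcc (1/H : ℝ) (1/2), x ≠ 0 := by
    intro x hx
    rw [uIcc_of_le hia] at hx
    exact ne_of_gt (lt_of_lt_of_le hip hx.1)
  have hu : ∀ x ∈ uIcc (1/H : ℝ) (1/2), HasDerivAt (fun t : ℝ => 1/t) (-(1/x^2)) x := by
    intro x hx
    simpa [one_div] using hasDerivAt_inv (hne0 x hx)
  have hv : ∀ x ∈ uIcc (1/H : ℝ) (1/2),
      HasDerivAt (fun t : ℝ => Real.sin (cr*t)/cr) (Real.cos (cr*x)) x := by
    intro x hx
    have h : HasDerivAt (fun t : ℝ => Real.sin (cr*t)/cr) (Real.cos (cr*x) * cr / cr) x :=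
      ((Real.hasDerivAt_sin (cr*x)).comp x (hg_deriv x)).div_const cr
    convert h using 1
    field_simp
  have hu' : IntervalIntegrable (fun x : ℝ => -(1/x^2)) volume (1/H) (1/2) := by
    refine ContinuousOn.intervalIntegrable ?_
    simpa using (cont_on_aux (k := 2) hH (fun _ => (-1 : ℝ)) continuous_const).congr
      (fun x hx => by ring)
  have hv' : IntervalIntegrable (fun x : ℝ => Real.cos (cr*x)) volume (1/H) (1/2) :=
    (Real.continuous_cos.comp (continuous_const.mul continuous_id)).intervalIntegrable _ _
  have hlast : (∫ x in (1/H:ℝ)..(1/2), -(1/x^2) * (Real.sin (cr*x)/cr))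
      = -((1/cr) * ∫ t in (1/H:ℝ)..(1/2), (1/t^2) * Real.sin (cr*t)) := by
    rw [show -((1/cr) * ∫ t in (1/H:ℝ)..(1/2), (1/t^2) * Real.sin (cr*t))
        = ∫ t in (1/H:ℝ)..(1/2), (-(1/cr)) * ((1/t^2) * Real.sin (cr*t)) from by
      rw [intervalIntegral.integral_const_mul]; ring]
    exact intervalIntegral.integral_congr fun x hx => by ring
  have hibp := intervalIntegral.integral_mul_deriv_eq_deriv_mul hu hv hu' hv'
  rw [hibp, hlast, show (1 : ℝ)/(1/H) = H from by field_simp,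
    show (1:ℝ)/(1/2) = 2 from by norm_num]
  ring

lemma J2_ibp (hH : 2 ≤ H) (hcr : cr ≠ 0) :
    (∫ t in (1/H:ℝ)..(1/2), (1/t^2) * Real.sin (cr*t))
      = 4*(-(Real.cos (cr*(1/2)))/cr) - H^2*(-(Real.cos (cr*(1/H)))/cr)
        - (2/cr) * ∫ t in (1/H:ℝ)..(1/2), (1/t^3) * Real.cos (cr*t) := by
  have h0 := Hpos hH
  have hia : (1/H : ℝ) ≤ 1/2 := invH_le hH
  have hip : (0:ℝ) < 1/H := invH_pos hH
  have hne0 : ∀ x ∈ uIcc (1/H : ℝ) (1/2), x ≠ 0 := by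
    intro x hx
    rw [uIcc_of_le hia] at hx
    exact ne_of_gt (lt_of_lt_of_le hip hx.1)
  have hu : ∀ x ∈ uIcc (1/H : ℝ) (1/2), HasDerivAt (fun t : ℝ => 1/t^2) (-(2/x^3)) x := by
    intro x hx
    have hx0 := hne0 x hx
    have h : HasDerivAt (fun t : ℝ => (t^2)⁻¹) (-((2:ℕ) * x ^ (2-1)) / (x^2)^2) x :=
      (hasDerivAt_pow 2 x).inv (pow_ne_zero 2 hx0)
    have h2 : HasDerivAt (fun t : ℝ => 1/t^2) (-((2:ℕ) * x ^ (2-1)) / (x^2)^2) x := by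
      simpa [one_div] using h
    convert h2 using 1
    field_simp
    ring
  have hv : ∀ x ∈ uIcc (1/H : ℝ) (1/2),
      HasDerivAt (fun t : ℝ => -(Real.cos (cr*t))/cr) (Real.sin (cr*x)) x := by
    intro x hx
    have h : HasDerivAt (fun t : ℝ => -(Real.cos (cr*t))/cr) (-(-Real.sin (cr*x) * cr) / cr) x :=
      (((Real.hasDerivAt_cos (cr*x)).comp x (hg_deriv x)).neg).div_const cr
    convert h using 1
    field_simp
  have hu' : IntervalIntegrable (fun x : ℝ => -(2/x^3)) volume (1/H) (1/2) := by
    refine ContinuousOn.intervalIntegrable ?_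
    refine ((cont_on_aux (k := 3) hH (fun _ => (-2 : ℝ)) continuous_const).congr
      (fun x hx => by ring))
  have hv' : IntervalIntegrable (fun x : ℝ => Real.sin (cr*x)) volume (1/H) (1/2) :=
    (Real.continuous_sin.comp (continuous_const.mul continuous_id)).intervalIntegrable _ _
  have hlast : (∫ x in (1/H:ℝ)..(1/2), -(2/x^3) * (-(Real.cos (cr*x))/cr))
      = (2/cr) * ∫ t in (1/H:ℝ)..(1/2), (1/t^3) * Real.cos (cr*t) := by
    rw [show (2/cr : ℝ) * ∫ t in (1/H:ℝ)..(1/2), (1/t^3) * Real.cos (cr*t)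
        = ∫ t in (1/H:ℝ)..(1/2), (2/cr) * ((1/t^3) * Real.cos (cr*t)) from
      (intervalIntegral.integral_const_mul _ _).symm]
    exact intervalIntegral.integral_congr fun x hx => by ring
  have hibp := intervalIntegral.integral_mul_deriv_eq_deriv_mul hu hv hu' hv'
  rw [hibp, hlast, show (1 : ℝ)/(1/H)^2 = H^2 from by field_simp,
    show (1:ℝ)/(1/2)^2 = 4 from by norm_num]
  try ring

lemma K3_bound (hH : 2 ≤ H) :
    |∫ t in (1/H:ℝ)..(1/2), (1/t^3) * Real.cos (cr*t)| ≤ (H^2 - 4)/2 := by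
  have h0 := Hpos hH
  have hia : (1/H : ℝ) ≤ 1/2 := invH_le hH
  have hip : (0:ℝ) < 1/H := invH_pos hH
  have h1 : |∫ t in (1/H:ℝ)..(1/2), (1/t^3) * Real.cos (cr*t)|
      ≤ ∫ t in (1/H:ℝ)..(1/2), |(1/t^3) * Real.cos (cr*t)| := by
    have h1' := intervalIntegral.norm_integral_le_integral_norm
        (f := fun t : ℝ => (1/t^3) * Real.cos (cr*t)) (μ := volume) hia
    simp only [Real.norm_eq_abs] at h1'
    exact h1'
  have h2 : (∫ t in (1/H:ℝ)..(1/2), |(1/t^3) * Real.cos (cr*t)|)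
      ≤ ∫ t in (1/H:ℝ)..(1/2), 1/t^3 := by
    refine intervalIntegral.integral_mono_on hia ?_ ?_ ?_
    · refine ContinuousOn.intervalIntegrable ?_
      exact (cont_on_aux (k := 3) hH _ (Real.continuous_cos.comp
        (continuous_const.mul continuous_id))).abs
    · refine ContinuousOn.intervalIntegrable ?_
      simpa using (cont_on_aux (k := 3) hH (fun _ => (1 : ℝ)) continuous_const).congr
        (fun x hx => by ring)
    · intro x hx
      have hx0 : 0 < x := lt_of_lt_of_le hip hx.1
      rw [abs_mul, abs_of_pos (by positivity : (0:ℝ) < 1/x^3)]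
      calc 1/x^3 * |Real.cos (cr*x)| ≤ 1/x^3 * 1 := by
            exact mul_le_mul_of_nonneg_left (Real.abs_cos_le_one _) (by positivity)
        _ = 1/x^3 := by ring
  have h3 : (∫ t in (1/H:ℝ)..(1/2), 1/t^3) = (H^2 - 4)/2 := by
    have hz : (∫ t in (1/H:ℝ)..(1/2), t ^ (-3 : ℤ))
        = ((1/2:ℝ) ^ ((-3:ℤ) + 1) - (1/H) ^ ((-3:ℤ) + 1)) / ((-3:ℤ) + 1) := by
      refine integral_zpow (Or.inr ⟨by norm_num, ?_⟩)
      rw [uIcc_of_le hia]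
      intro hmem
      exact absurd hmem.1 (by linarith)
    rw [show (∫ t in (1/H:ℝ)..(1/2), 1/t^3) = ∫ t in (1/H:ℝ)..(1/2), t ^ (-3 : ℤ) from ?_]
    · rw [hz]
      norm_num
      ring_nf
    · refine intervalIntegral.integral_congr fun x hx => ?_
      rw [zpow_neg, one_div]
      norm_cast
  calc |∫ t in (1/H:ℝ)..(1/2), (1/t^3) * Real.cos (cr*t)|
      ≤ ∫ t in (1/H:ℝ)..(1/2), 1/t^3 := le_trans h1 h2
    _ = (H^2 - 4)/2 := h3

end IBP

lemma norm_b_le_sq {H : ℝ} (hH : 2 ≤ H) {n : ℤ} (hn : n ≠ 0) :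
    ‖fourierCoeff (⇑(F H)) n‖ ≤ H / (n:ℝ)^2 := by
  have h0 := Hpos hH
  have hπ : (0:ℝ) < π := Real.pi_pos
  have hn' : ((n:ℝ)) ≠ 0 := Int.cast_ne_zero.mpr hn
  have hn2 : (0:ℝ) < (n:ℝ)^2 := by positivity
  set cr : ℝ := 2*π*(n:ℝ) with hcrdef
  have hcr : cr ≠ 0 := by
    rw [hcrdef]
    simp [Real.pi_ne_zero, hn']
  have hcra : 0 < |cr| := abs_pos.mpr hcr
  have hform : fourierCoeff (⇑(F H)) n
      = (((2/(H*cr)) * ∫ t in (1/H:ℝ)..(1/2), (1/t^2) * Real.sin (cr*t) : ℝ) : ℂ) := by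
    have h1 := J1_ibp (cr := cr) (H := H) hH hcr
    have hs0 : Real.sin (cr*(1/2)) = 0 := by
      rw [show cr*(1/2) = (n:ℝ)*π from by rw [hcrdef]; push_cast; ring]
      exact Real.sin_int_mul_pi n
    rw [bn_formula hH hn, ← hcrdef, div_eq_mul_one_div cr H, h1, hs0]
    congr 1
    rw [hcrdef]
    have hπ' : (π:ℝ) ≠ 0 := Real.pi_ne_zero
    have hH' : H ≠ 0 := ne_of_gt h0
    field_simp
    ring
  rw [hform, Complex.norm_real, Real.norm_eq_abs]
  have hJ2 : |∫ t in (1/H:ℝ)..(1/2), (1/t^2) * Real.sin (cr*t)| ≤ 2*H^2/|cr| := by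
    rw [J2_ibp hH hcr]
    have hK := K3_bound (cr := cr) (H := H) hH
    have t1 : |4*(-(Real.cos (cr*(1/2)))/cr)| ≤ 4/|cr| := by
      rw [abs_mul, abs_div, abs_neg]
      rw [show |(4:ℝ)| = 4 from by norm_num]
      calc (4:ℝ)*(|Real.cos (cr*(1/2))|/|cr|) ≤ 4*(1/|cr|) := by
            gcongr
            exact Real.abs_cos_le_one _
        _ = 4/|cr| := by ring
    have t2 : |H^2*(-(Real.cos (cr*(1/H)))/cr)| ≤ H^2/|cr| := by
      rw [abs_mul, abs_div, abs_neg]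
      rw [show |H^2| = H^2 from abs_of_pos (by positivity)]
      calc H^2*(|Real.cos (cr*(1/H))|/|cr|) ≤ H^2*(1/|cr|) := by
            gcongr
            exact Real.abs_cos_le_one _
        _ = H^2/|cr| := by ring
    have t3 : |(2/cr) * ∫ t in (1/H:ℝ)..(1/2), (1/t^3) * Real.cos (cr*t)| ≤ (H^2-4)/|cr| := by
      rw [abs_mul, abs_div]
      rw [show |(2:ℝ)| = 2 from by norm_num]
      calc 2/|cr| * |∫ t in (1/H:ℝ)..(1/2), (1/t^3) * Real.cos (cr*t)|
          ≤ 2/|cr| * ((H^2-4)/2) := by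
            exact mul_le_mul_of_nonneg_left hK (by positivity)
        _ = (H^2-4)/|cr| := by field_simp
    calc |4*(-(Real.cos (cr*(1/2)))/cr) - H^2*(-(Real.cos (cr*(1/H)))/cr)
          - (2/cr) * ∫ t in (1/H:ℝ)..(1/2), (1/t^3) * Real.cos (cr*t)|
        ≤ |4*(-(Real.cos (cr*(1/2)))/cr) - H^2*(-(Real.cos (cr*(1/H)))/cr)|
          + |(2/cr) * ∫ t in (1/H:ℝ)..(1/2), (1/t^3) * Real.cos (cr*t)| := abs_sub _ _
      _ ≤ |4*(-(Real.cos (cr*(1/2)))/cr)| + |H^2*(-(Real.cos (cr*(1/H)))/cr)|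
          + |(2/cr) * ∫ t in (1/H:ℝ)..(1/2), (1/t^3) * Real.cos (cr*t)| := by
            have := abs_sub (4*(-(Real.cos (cr*(1/2)))/cr)) (H^2*(-(Real.cos (cr*(1/H)))/cr))
            linarith
      _ ≤ 4/|cr| + H^2/|cr| + (H^2-4)/|cr| := by linarith
      _ = 2*H^2/|cr| := by field_simp; ring
  rw [abs_mul]
  have habs1 : |2/(H*cr)| = 2/(H*|cr|) := by
    rw [abs_div, abs_mul, abs_of_pos h0]
    norm_num
  rw [habs1]
  calc 2/(H*|cr|) * |∫ t in (1/H:ℝ)..(1/2), (1/t^2) * Real.sin (cr*t)|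
      ≤ 2/(H*|cr|) * (2*H^2/|cr|) := by
        exact mul_le_mul_of_nonneg_left hJ2 (by positivity)
    _ = 4*H/|cr|^2 := by
        have hA : |cr| ≠ 0 := ne_of_gt hcra
        have hH' : H ≠ 0 := ne_of_gt h0
        field_simp
        norm_num
    _ = 4*H/cr^2 := by rw [sq_abs]
    _ ≤ H/(n:ℝ)^2 := by
        rw [hcrdef, div_le_div_iff₀ (by positivity) hn2]
        have hπ3 : (3:ℝ) < π := Real.pi_gt_three
        have h9 : (9:ℝ) < π^2 := by nlinarith
        nlinarith [mul_pos h0 hn2, h9]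

lemma summable_b {H : ℝ} (hH : 2 ≤ H) : Summable (fun n : ℤ => fourierCoeff (⇑(F H)) n) := by
  have h0 := Hpos hH
  refine Summable.of_norm_bounded
    (g := fun n : ℤ => (if n = 0 then I0 H else 0) + H * (1/((n:ℝ))^2)) ?_ ?_
  · refine Summable.add ?_ ?_
    · refine summable_of_ne_finset_zero (s := ({0} : Finset ℤ)) fun n hn => ?_
      rw [Finset.mem_singleton] at hn
      simp [hn]
    · exact (summable_one_div_int_pow.mpr one_lt_two).mul_left H
  · intro n
    rcases eq_or_ne n 0 with rfl | hn
    · simpa using norm_b_le hH 0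
    · show _ ≤ (if n = 0 then I0 H else 0) + H * (1/((n:ℝ))^2)
      rw [if_neg hn]
      have h1 := norm_b_le_sq hH hn
      have h2 : H/((n:ℝ))^2 = H * (1/((n:ℝ))^2) := by ring
      rw [h2] at h1
      linarith

end MOI

/-- for `H ≥ 2` the function `t ↦ min{1, 1/(H‖t‖)}` has a Fourier expansion
`Σ_h b_h e(ht)` with `|b_h| ≤ C min{(log H)/H, H/h²}` for `h ≠ 0` and `|b_0| ≤ C (log H)/H`. -/
theorem minOneInv_fourier : ∃ C : ℝ, 0 < C ∧ ∀ H : ℝ, 2 ≤ H → ∃ b : ℤ → ℂ,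
    (∀ t : ℝ, (minOneInv H t : ℂ) =
      ∑' h : ℤ, b h * Complex.exp (2 * Real.pi * Complex.I * ((h : ℝ) * t : ℝ))) ∧
    ‖b 0‖ ≤ C * Real.log H / H ∧
    (∀ h : ℤ, h ≠ 0 → ‖b h‖ ≤ C * min (Real.log H / H) (H / (h : ℝ) ^ 2)) := by
  refine ⟨6, by norm_num, fun H hH => ?_⟩
  refine ⟨fun n => fourierCoeff (⇑(MOI.F H)) n, ?_, ?_, ?_⟩
  · intro t
    have hsum := MOI.summable_b hH
    have hp := has_pointwise_sum_fourier_series_of_summable hsum ((t : ℝ) : AddCircle (1:ℝ))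
    rw [MOI.F_apply] at hp
    have htsum := hp.tsum_eq
    rw [MOI.g_eq hH t, ← htsum]
    refine tsum_congr fun i => ?_
    rw [smul_eq_mul, fourier_coe_apply]
    congr 1
    push_cast
    ring
  · exact le_trans (MOI.norm_b_le hH 0) (MOI.I0_le hH)
  · intro h hn
    rcases le_total (Real.log H / H) (H/((h:ℝ))^2) with hc | hc
    · rw [min_eq_left hc]
      have h1 := le_trans (MOI.norm_b_le hH h) (MOI.I0_le hH)
      have h2 : (6:ℝ) * Real.log H / H = 6 * (Real.log H / H) := by ring
      linarith
    · rw [min_eq_right hc]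
      have h1 := MOI.norm_b_le_sq hH hn
      have hpos : (0:ℝ) ≤ H/((h:ℝ))^2 := by
        have : (0:ℝ) ≤ H := by linarith
        positivity
      linarith
end

section
/- (Oscillation criterion for pointwise convergence) Let (X, μ) be a measure space and (f_n) a sequence of measurable functions such that sup over all finite increasing index sequences (M_j)_{j≤J} of ‖O_{(M_j)_{j≤J}}(f_n)‖_{L²(X)} = o(J^{1/2}) as J → ∞. Then for every ε > 0, μ({ x : limsup_{n,m→∞} |f_n(x) - f_m(x)| ≥ ε }) = 0; in particular (f_n) converges μ-almost everywhere. -/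
open MeasureTheory Filter

section OscAux
open ENNReal

theorem osc_aux {X : Type*} [MeasurableSpace X] (μ : Measure X)
    (f : ℕ → X → ℝ) (hf : ∀ n, Measurable (f n))
    (ρ : ℕ → ℝ)
    (hρ : Tendsto (fun J : ℕ => ρ J / Real.sqrt J) atTop (nhds 0))
    (hO : ∀ J : ℕ, ∀ M : Fin (J + 1) → ℕ, StrictMono M →
      eLpNorm (fun x => Real.sqrt (∑ j : Fin J,
          (⨆ n ∈ Set.Icc (M j.castSucc) (M j.succ), |f n x - f (M j.castSucc) x|) ^ 2)) 2 μ
        ≤ ENNReal.ofReal (ρ J))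
    (c : ℝ) (hc : 0 < c) :
    μ {x | ∀ N : ℕ, ∃ n ≥ N, ∃ m ≥ N, c ≤ |f n x - f m x|} = 0 := by
  set A : Set X := {x | ∀ N : ℕ, ∃ n ≥ N, ∃ m ≥ N, c ≤ |f n x - f m x|} with hA_def
  by_contra hA
  -- measurability of A
  have hAmeas : MeasurableSet A := by
    have : A = ⋂ N : ℕ, ⋃ n ∈ Set.Ici N, ⋃ m ∈ Set.Ici N, {x | c ≤ |f n x - f m x|} := by
      ext x
      simp [hA_def, Set.mem_iInter, Set.mem_iUnion]
    rw [this]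
    exact MeasurableSet.iInter fun N => MeasurableSet.biUnion (Set.to_countable _)
      fun n _ => MeasurableSet.biUnion (Set.to_countable _)
        fun m _ => measurableSet_le measurable_const ((hf n).sub (hf m)).abs
  -- the exceptional sets
  set E : ℕ → ℕ → Set X :=
    fun m N => A ∩ ⋃ n ∈ Finset.Icc m N, {x | c / 2 ≤ |f n x - f m x|} with hE_def
  have hEmeas : ∀ m N, MeasurableSet (E m N) := fun m N =>
    hAmeas.inter (MeasurableSet.biUnion (Finset.Icc m N).countable_toSet
      fun n _ => measurableSet_le measurable_const ((hf n).sub (hf m)).abs)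
  have hEmono : ∀ m, Monotone (E m) := by
    intro m N N' h
    exact Set.inter_subset_inter_right _ (Set.biUnion_subset_biUnion_left
      (by exact_mod_cast Finset.Icc_subset_Icc_right h))
  have hEunion : ∀ m, (⋃ N, E m N) = A := by
    intro m
    apply Set.Subset.antisymm
    · exact Set.iUnion_subset fun N => Set.inter_subset_left
    · intro x hx
      obtain ⟨n, hn, m', hm', hcle⟩ := hx m
      have htri : c ≤ |f n x - f m x| + |f m' x - f m x| := by
        have : |f n x - f m' x| ≤ |f n x - f m x| + |f m x - f m' x| := abs_sub_le _ _ _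
        rw [abs_sub_comm (f m x) (f m' x)] at this
        linarith
      have hkey : ∃ k, m ≤ k ∧ c / 2 ≤ |f k x - f m x| := by
        by_contra hcon
        push_neg at hcon
        have h1 := hcon n hn
        have h2 := hcon m' hm'
        linarith
      obtain ⟨k, hk1, hk2⟩ := hkey
      refine Set.mem_iUnion.2 ⟨k, hx, ?_⟩
      exact Set.mem_biUnion (Finset.mem_Icc.2 ⟨hk1, le_refl k⟩) hk2
  set a : ℝ≥0∞ := min (μ A) 1 with ha_def
  have ha0 : a ≠ 0 := by
    intro h
    rcases min_eq_iff.1 (h ▸ rfl : min (μ A) 1 = 0) with ⟨h1, -⟩ | ⟨h1, -⟩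
    · exact hA h1
    · exact one_ne_zero h1
  have hatop : a ≠ ⊤ := ne_top_of_le_ne_top one_ne_top (min_le_right _ _)
  have hhalf : a / 2 < a := ENNReal.half_lt_self ha0 hatop
  -- key inductive choice
  have key : ∀ m : ℕ, ∃ N, m < N ∧ a / 2 ≤ μ (E m N) := by
    intro m
    have hsup : μ A = ⨆ N, μ (E m N) := by
      rw [← hEunion m]
      exact Directed.measure_iUnion ((hEmono m).directed_le)
    have : a / 2 < ⨆ N, μ (E m N) := by
      rw [← hsup]
      exact lt_of_lt_of_le hhalf (min_le_left _ _)
    obtain ⟨N, hN⟩ := lt_iSup_iff.1 this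
    exact ⟨max N (m + 1), lt_of_lt_of_le (Nat.lt_succ_self m) (le_max_right _ _),
      le_trans hN.le (measure_mono (hEmono m (le_max_left _ _)))⟩
  choose F hF1 hF2 using key
  -- the sequence M
  set M : ℕ → ℕ := fun k => Nat.rec 0 (fun _ mk => F mk) k with hM_def
  have hM_succ : ∀ k, M (k + 1) = F (M k) := fun k => rfl
  have hM_mono : StrictMono M := strictMono_nat_of_lt_succ fun k => by
    rw [hM_succ]; exact hF1 (M k)
  have hM_bound : ∀ k, a / 2 ≤ μ (E (M k) (M (k + 1))) := fun k => by
    rw [hM_succ]; exact hF2 (M k)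
  set K : ℝ≥0∞ := ENNReal.ofReal ((c / 2) ^ 2) * (a / 2) with hK_def
  have hK0 : K ≠ 0 := by
    simp only [hK_def, ne_eq, mul_eq_zero, not_or]
    constructor
    · simp only [ENNReal.ofReal_eq_zero, not_le]
      positivity
    · simp [ENNReal.div_eq_zero_iff, ha0]
  have hKtop : K ≠ ⊤ := by
    apply ENNReal.mul_ne_top ENNReal.ofReal_ne_top
    exact (ENNReal.div_lt_top hatop (by norm_num)).ne
  -- main estimate
  have hmain : ∀ J : ℕ, (J : ℝ≥0∞) * K ≤ ENNReal.ofReal (ρ J) ^ 2 := by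
    intro J
    set M' : Fin (J + 1) → ℕ := fun i => M i with hM'_def
    have hM'mono : StrictMono M' := fun i j h => hM_mono h
    have hle := hO J M' hM'mono
    set g : X → ℝ := fun x => Real.sqrt (∑ j : Fin J,
        (⨆ n ∈ Set.Icc (M' j.castSucc) (M' j.succ), |f n x - f (M' j.castSucc) x|) ^ 2)
      with hg_def
    have hMc : ∀ j : Fin J, M' j.castSucc = M j := fun j => rfl
    have hMs : ∀ j : Fin J, M' j.succ = M (j + 1) := fun j => rfl
    have hsup_ge : ∀ (j : Fin J) (x : X), x ∈ E (M j) (M (j + 1)) →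
        c / 2 ≤ ⨆ n ∈ Set.Icc (M' j.castSucc) (M' j.succ), |f n x - f (M' j.castSucc) x| := by
      intro j x hx
      rw [hMc, hMs]
      obtain ⟨n, hn1, hn2⟩ := Set.mem_iUnion₂.1 hx.2
      have hset : n ∈ Set.Icc (M (j : ℕ)) (M ((j : ℕ) + 1)) := by
        rw [← Finset.coe_Icc]; exact_mod_cast hn1
      have hbdd : BddAbove (Set.range fun n =>
          ⨆ _ : n ∈ Set.Icc (M (j : ℕ)) (M ((j : ℕ) + 1)), |f n x - f (M (j : ℕ)) x|) := by
        apply Set.Finite.bddAbove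
        apply Set.Finite.subset (Set.Finite.insert 0
          (((Set.finite_Icc (M (j : ℕ)) (M ((j : ℕ) + 1)))).image
            fun n => |f n x - f (M (j : ℕ)) x|))
        rintro y ⟨n', rfl⟩
        show (⨆ _ : n' ∈ Set.Icc (M (j : ℕ)) (M ((j : ℕ) + 1)), |f n' x - f (M (j : ℕ)) x|) ∈ _
        by_cases hn' : n' ∈ Set.Icc (M (j : ℕ)) (M ((j : ℕ) + 1))
        · rw [ciSup_pos hn']
          exact Set.mem_insert_of_mem _ ⟨n', hn', rfl⟩
        · haveI : IsEmpty (n' ∈ Set.Icc (M (j : ℕ)) (M ((j : ℕ) + 1))) := ⟨hn'⟩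
          rw [Real.iSup_of_isEmpty]
          exact Set.mem_insert _ _
      calc c / 2 ≤ |f n x - f (M (j : ℕ)) x| := hn2
        _ = ⨆ _ : n ∈ Set.Icc (M (j : ℕ)) (M ((j : ℕ) + 1)), |f n x - f (M (j : ℕ)) x| :=
            (ciSup_pos (f := fun _ => |f n x - f (M (j : ℕ)) x|) hset).symm
        _ ≤ _ := le_ciSup hbdd n
    have hsup_nonneg : ∀ (j : Fin J) (x : X),
        0 ≤ ⨆ n ∈ Set.Icc (M' j.castSucc) (M' j.succ), |f n x - f (M' j.castSucc) x| :=
      fun j x => Real.iSup_nonneg fun n => Real.iSup_nonneg fun _ => abs_nonneg _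
    have hpt : ∀ x : X, ∑ j : Fin J, (E (M j) (M (j + 1))).indicator
        (fun _ => ENNReal.ofReal ((c / 2) ^ 2)) x ≤
        ENNReal.ofReal (∑ j : Fin J,
          (⨆ n ∈ Set.Icc (M' j.castSucc) (M' j.succ), |f n x - f (M' j.castSucc) x|) ^ 2) := by
      intro x
      rw [ENNReal.ofReal_sum_of_nonneg fun j _ => sq_nonneg _]
      refine Finset.sum_le_sum fun j _ => ?_
      by_cases hx : x ∈ E (M j) (M (j + 1))
      · rw [Set.indicator_of_mem hx]
        exact ENNReal.ofReal_le_ofReal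
          (pow_le_pow_left₀ (by positivity) (hsup_ge j x hx) 2)
      · rw [Set.indicator_of_notMem hx]
        exact zero_le
    have hsq : ∫⁻ x, ((‖g x‖₊ : ℝ≥0∞)) ^ (2 : ℝ) ∂μ ≤ ENNReal.ofReal (ρ J) ^ 2 := by
      have h3 := ENNReal.rpow_le_rpow hle (by norm_num : (0 : ℝ) ≤ 2)
      rw [eLpNorm_eq_lintegral_rpow_enorm_toReal (by norm_num) (by norm_num)] at h3
      simp only [ENNReal.toReal_ofNat] at h3
      calc ∫⁻ x, ((‖g x‖₊ : ℝ≥0∞)) ^ (2 : ℝ) ∂μ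
          = ((∫⁻ x, ((‖g x‖₊ : ℝ≥0∞)) ^ (2 : ℝ) ∂μ) ^ (1 / 2 : ℝ)) ^ (2 : ℝ) := by
            rw [← ENNReal.rpow_mul]; norm_num
        _ ≤ ENNReal.ofReal (ρ J) ^ (2 : ℝ) := h3
        _ = ENNReal.ofReal (ρ J) ^ 2 := by
            rw [← ENNReal.rpow_natCast (ENNReal.ofReal (ρ J)) 2]; norm_num
    calc (J : ℝ≥0∞) * K
        = ∑ _j : Fin J, ENNReal.ofReal ((c / 2) ^ 2) * (a / 2) := by
          rw [Finset.sum_const, Finset.card_univ, Fintype.card_fin, nsmul_eq_mul, hK_def]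
      _ ≤ ∑ j : Fin J, ENNReal.ofReal ((c / 2) ^ 2) * μ (E (M j) (M (j + 1))) :=
          Finset.sum_le_sum fun j _ => mul_le_mul_right (hM_bound j) _
      _ = ∑ j : Fin J, ∫⁻ x, (E (M j) (M (j + 1))).indicator
            (fun _ => ENNReal.ofReal ((c / 2) ^ 2)) x ∂μ := by
          refine Finset.sum_congr rfl fun j _ => ?_
          rw [lintegral_indicator_const (hEmeas _ _)]
      _ = ∫⁻ x, ∑ j : Fin J, (E (M j) (M (j + 1))).indicator
            (fun _ => ENNReal.ofReal ((c / 2) ^ 2)) x ∂μ :=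
          (lintegral_finset_sum _ fun j _ => measurable_const.indicator (hEmeas _ _)).symm
      _ ≤ ∫⁻ x, ENNReal.ofReal (∑ j : Fin J,
            (⨆ n ∈ Set.Icc (M' j.castSucc) (M' j.succ), |f n x - f (M' j.castSucc) x|) ^ 2) ∂μ :=
          lintegral_mono hpt
      _ = ∫⁻ x, ((‖g x‖₊ : ℝ≥0∞)) ^ (2 : ℝ) ∂μ := by
          refine lintegral_congr fun x => ?_
          have hsum : (0 : ℝ) ≤ ∑ j : Fin J,
              (⨆ n ∈ Set.Icc (M' j.castSucc) (M' j.succ), |f n x - f (M' j.castSucc) x|) ^ 2 :=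
            Finset.sum_nonneg fun j _ => sq_nonneg _
          have h1 : g x ^ (2 : ℝ) = ∑ j : Fin J,
              (⨆ n ∈ Set.Icc (M' j.castSucc) (M' j.succ), |f n x - f (M' j.castSucc) x|) ^ 2 := by
            rw [Real.rpow_two, hg_def, Real.sq_sqrt hsum]
          rw [← enorm_eq_nnnorm, Real.enorm_eq_ofReal (by rw [hg_def]; exact Real.sqrt_nonneg _),
            ENNReal.ofReal_rpow_of_nonneg (by rw [hg_def]; exact Real.sqrt_nonneg _)
              (by norm_num : (0:ℝ) ≤ 2), h1]
      _ ≤ ENNReal.ofReal (ρ J) ^ 2 := hsq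
  -- derive contradiction
  have hk : 0 < K.toReal := ENNReal.toReal_pos hK0 hKtop
  have hlim : Tendsto (fun J : ℕ => (ρ J / Real.sqrt J) ^ 2) atTop (nhds 0) := by
    have := hρ.mul hρ
    simp only [mul_zero] at this
    simpa [pow_two] using this
  obtain ⟨J, hJev⟩ := ((hlim.eventually (gt_mem_nhds hk)).and (eventually_ge_atTop 1)).exists
  obtain ⟨hJk, hJ1⟩ := hJev
  have hJR : (J : ℝ) ≠ 0 := Nat.cast_ne_zero.2 (Nat.one_le_iff_ne_zero.1 hJ1)
  have hsqr : (ρ J) ^ 2 = (J : ℝ) * ((ρ J / Real.sqrt J) ^ 2) := by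
    rw [div_pow, Real.sq_sqrt (Nat.cast_nonneg J)]
    field_simp
  have hle2 : ENNReal.ofReal (ρ J) ^ 2 ≤
      (J : ℝ≥0∞) * ENNReal.ofReal ((ρ J / Real.sqrt J) ^ 2) := by
    rcases le_or_gt 0 (ρ J) with h | h
    · rw [← ENNReal.ofReal_pow h, hsqr, ENNReal.ofReal_mul (Nat.cast_nonneg J),
        ENNReal.ofReal_natCast]
    · rw [ENNReal.ofReal_of_nonpos h.le]
      simp
  have hcon := le_trans (hmain J) hle2
  have hJne : (J : ℝ≥0∞) ≠ 0 := Nat.cast_ne_zero.2 (Nat.one_le_iff_ne_zero.1 hJ1)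
  have hKle : K ≤ ENNReal.ofReal ((ρ J / Real.sqrt J) ^ 2) :=
    (ENNReal.mul_le_mul_iff_right hJne (ENNReal.natCast_ne_top J)).1 hcon
  have hlt : ENNReal.ofReal ((ρ J / Real.sqrt J) ^ 2) < K := by
    rw [← ENNReal.ofReal_toReal hKtop]
    exact (ENNReal.ofReal_lt_ofReal_iff hk).2 hJk
  exact absurd hKle hlt.not_ge

end OscAux

/-- oscillation criterion for pointwise convergence: if the `L²` norms of
the oscillation operators of `(f_n)` along arbitrary finite increasing sequences of length
`J` are bounded by `ρ(J) = o(J^{1/2})`, then for every `ε > 0` the set where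
`limsup_{n,m} |f_n - f_m| ≥ ε` is null; in particular `(f_n)` converges a.e. -/
theorem oscillation_criterion {X : Type*} [MeasurableSpace X] (μ : Measure X)
    (f : ℕ → X → ℝ) (hf : ∀ n, Measurable (f n))
    (ρ : ℕ → ℝ)
    (hρ : Tendsto (fun J : ℕ => ρ J / Real.sqrt J) atTop (nhds 0))
    (hO : ∀ J : ℕ, ∀ M : Fin (J + 1) → ℕ, StrictMono M →
      eLpNorm (fun x => Real.sqrt (∑ j : Fin J,
          (⨆ n ∈ Set.Icc (M j.castSucc) (M j.succ), |f n x - f (M j.castSucc) x|) ^ 2)) 2 μ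
        ≤ ENNReal.ofReal (ρ J)) :
    (∀ ε : ℝ, 0 < ε →
      μ {x | ENNReal.ofReal ε ≤
        Filter.limsup (fun p : ℕ × ℕ => ENNReal.ofReal |f p.1 x - f p.2 x|)
          (atTop ×ˢ atTop)} = 0) ∧
    ∀ᵐ x ∂μ, ∃ L : ℝ, Tendsto (fun n => f n x) atTop (nhds L) := by
  have haux : ∀ c : ℝ, 0 < c →
      μ {x | ∀ N : ℕ, ∃ n ≥ N, ∃ m ≥ N, c ≤ |f n x - f m x|} = 0 :=
    fun c hc => osc_aux μ f hf ρ hρ hO c hc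
  constructor
  · intro ε hε
    refine measure_mono_null ?_ (haux (2 * ε / 3) (by positivity))
    intro x hx
    intro N
    by_contra hcon
    push_neg at hcon
    have hev : ∀ᶠ p : ℕ × ℕ in atTop ×ˢ atTop,
        ENNReal.ofReal |f p.1 x - f p.2 x| ≤ ENNReal.ofReal (2 * ε / 3) := by
      filter_upwards [(eventually_ge_atTop N).prod_mk (eventually_ge_atTop N)] with p hp
      exact ENNReal.ofReal_le_ofReal (hcon p.1 hp.1 p.2 hp.2).le
    have hls := Filter.limsup_le_of_le (by isBoundedDefault) hev
    have h1 : ENNReal.ofReal ε ≤ ENNReal.ofReal (2 * ε / 3) := le_trans hx hls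
    have h2 := (ENNReal.ofReal_le_ofReal_iff (by positivity)).1 h1
    linarith
  · have hnull : μ (⋃ k : ℕ,
        {x | ∀ N : ℕ, ∃ n ≥ N, ∃ m ≥ N, 1 / ((k : ℝ) + 1) ≤ |f n x - f m x|}) = 0 :=
      measure_iUnion_null fun k => haux _ (by positivity)
    rw [ae_iff]
    refine measure_mono_null ?_ hnull
    intro x hx
    by_contra hcon
    have hnot : ∀ k : ℕ,
        ¬ (∀ N : ℕ, ∃ n ≥ N, ∃ m ≥ N, 1 / ((k : ℝ) + 1) ≤ |f n x - f m x|) := by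
      simpa [Set.mem_iUnion] using hcon
    apply hx
    have hcauchy : CauchySeq fun n => f n x := by
      rw [Metric.cauchySeq_iff]
      intro δ hδ
      obtain ⟨k, hk⟩ := exists_nat_one_div_lt hδ
      have := hnot k
      push_neg at this
      obtain ⟨N, hN⟩ := this
      refine ⟨N, fun n hn m hm => ?_⟩
      have := hN n hn m hm
      rw [Real.dist_eq]
      calc |f n x - f m x| < 1 / ((k : ℝ) + 1) := this
        _ < δ := hk
    obtain ⟨L, hL⟩ := cauchySeq_tendsto_of_complete hcauchy
    exact ⟨L, hL⟩
end
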